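/- In the Neyman–Scott problem, the MLE σ̂² = (1/(4n)) Σ_{i=1}^n (X_{i1}−X_{i2})² is inconsistent: as n → ∞, σ̂² converges in probability to σ²/2 ≠ σ² (by the law of large numbers applied to the iid summands (X_{i1}−X_{i2})²/4 with mean σ²/2). -/

import Mathlib

/-!
The nuisance means cancel in the within-pair differences: `X i 0 - X i 1 ∼ N(0, 2σ²)` for every
`i`, so the squared differences are i.i.d. with mean `2σ²`. The strong law of large numbers makes
`σ̂²_n` converge almost surely, hence in probability, to `2σ² / 4 = σ² / 2`.
-/

open MeasureTheory ProbabilityTheory Filter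
open scoped NNReal Topology

namespace ProbabilityTheory

variable {Ω : Type*} {mΩ : MeasurableSpace Ω} {P : Measure Ω}

lemma HasLaw.of_map_eq {𝓧 : Type*} {m𝓧 : MeasurableSpace 𝓧} {μ : Measure 𝓧} [NeZero μ]
    {X : Ω → 𝓧} (h : P.map X = μ) : HasLaw X μ P :=
  ⟨.of_map_ne_zero (h ▸ NeZero.ne μ), h⟩

lemma gaussianReal_sub_gaussianReal_of_indepFun {m₁ m₂ : ℝ} {v₁ v₂ : ℝ≥0} {X Y : Ω → ℝ}
    (hXY : IndepFun X Y P) (hX : P.map X = gaussianReal m₁ v₁)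
    (hY : P.map Y = gaussianReal m₂ v₂) :
    P.map (fun ω ↦ X ω - Y ω) = gaussianReal (m₁ - m₂) (v₁ + v₂) := by
  simp_rw [sub_eq_add_neg]
  exact gaussianReal_add_gaussianReal_of_indepFun (hXY.comp measurable_id measurable_neg) hX
    (gaussianReal_neg (.of_map_eq hY)).map_eq

lemma integral_sq_gaussianReal_zero (v : ℝ≥0) : ∫ x, x ^ 2 ∂gaussianReal 0 v = v := by
  rw [← variance_of_integral_eq_zero aemeasurable_id' integral_id_gaussianReal,
    variance_fun_id_gaussianReal]

lemma integrable_sq_gaussianReal (μ : ℝ) (v : ℝ≥0) :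
    Integrable (fun x ↦ x ^ 2) (gaussianReal μ v) :=
  (memLp_id_gaussianReal 2).integrable_sq

lemma strong_law_ae_comp_of_hasLaw {E : Type*} {mE : MeasurableSpace E} {μ : Measure E}
    {Y : ℕ → Ω → E} (hindep : iIndepFun Y P) (hlaw : ∀ i, HasLaw (Y i) μ P)
    {f : E → ℝ} (hf : Measurable f) (hint : Integrable f μ) :
    ∀ᵐ ω ∂P, Tendsto (fun n : ℕ ↦ (∑ i ∈ Finset.range n, f (Y i ω)) / n) atTop
      (𝓝 (∫ x, f x ∂μ)) := by
  have hident : ∀ i, IdentDistrib (fun ω ↦ f (Y i ω)) (fun ω ↦ f (Y 0 ω)) P P := fun i ↦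
    (IdentDistrib.mk (hlaw i).aemeasurable (hlaw 0).aemeasurable
      ((hlaw i).map_eq.trans (hlaw 0).map_eq.symm)).comp hf
  have hmean : ∫ ω, f (Y 0 ω) ∂P = ∫ x, f x ∂μ := (hlaw 0).integral_comp hf.aestronglyMeasurable
  rw [← hmean]
  exact strong_law_ae_real (fun i ω ↦ f (Y i ω))
    (((hlaw 0).map_eq ▸ hint).comp_aemeasurable (hlaw 0).aemeasurable)
    (fun i j hij ↦ (hindep.indepFun hij).comp hf hf) hident

end ProbabilityTheory

theorem neyman_scott_inconsistency_general
    {Ω : Type*} [MeasurableSpace Ω] (P : Measure Ω) [IsProbabilityMeasure P]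
    (X : ℕ → Fin 2 → Ω → ℝ) (ξ : ℕ → ℝ) (v : NNReal) (hv : v ≠ 0)
    (hdist : ∀ i j, Measure.map (X i j) P = gaussianReal (ξ i) v)
    (hpair : ∀ i, IndepFun (X i 0) (X i 1) P)
    (hiid : iIndepFun
      (fun i ω => X i 0 ω - X i 1 ω) P) :
    TendstoInMeasure P
      (fun (n : ℕ) ω => (1 / (4 * (n : ℝ))) * ∑ i ∈ Finset.range n,
        (X i 0 ω - X i 1 ω) ^ 2)
      atTop (fun _ => (v : ℝ) / 2) ∧
    (v : ℝ) / 2 ≠ (v : ℝ) := by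
  have hlaw : ∀ i, HasLaw (fun ω ↦ X i 0 ω - X i 1 ω) (gaussianReal 0 (v + v)) P := fun i ↦
    .of_map_eq <| by
      simpa using gaussianReal_sub_gaussianReal_of_indepFun (hpair i) (hdist i 0) (hdist i 1)
  have hslln := strong_law_ae_comp_of_hasLaw hiid hlaw (continuous_pow 2).measurable
    (integrable_sq_gaussianReal 0 (v + v))
  rw [integral_sq_gaussianReal_zero] at hslln
  refine ⟨tendstoInMeasure_of_tendsto_ae (fun n ↦ ?_) ?_, (half_lt_self (by positivity)).ne⟩
  · exact ((Finset.aemeasurable_fun_sum _ fun i _ ↦ (hlaw i).aemeasurable.pow_const 2).const_mul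
      _).aestronglyMeasurable
  · filter_upwards [hslln] with ω hω
    convert hω.const_mul (1 / 4) using 2 with n
    · ring
    · push_cast; ring

/-- Neyman–Scott inconsistency of the MLE of the variance:
`σ̂²_n = (1/(4n)) Σ_{i<n} (X_{i1}-X_{i2})²` converges in probability to
`σ²/2 ≠ σ²`. -/
theorem neyman_scott_inconsistency
    {Ω : Type*} [MeasurableSpace Ω] (P : Measure Ω) [IsProbabilityMeasure P]
    (X : ℕ → Fin 2 → Ω → ℝ) (ξ : ℕ → ℝ) (v : NNReal) (hv : v ≠ 0)
    (hmeas : ∀ i j, Measurable (X i j))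
    (hdist : ∀ i j, Measure.map (X i j) P = gaussianReal (ξ i) v)
    (hpair : ∀ i, IndepFun (X i 0) (X i 1) P)
    (hiid : iIndepFun
      (fun i ω => X i 0 ω - X i 1 ω) P) :
    TendstoInMeasure P
      (fun (n : ℕ) ω => (1 / (4 * (n : ℝ))) * ∑ i ∈ Finset.range n,
        (X i 0 ω - X i 1 ω) ^ 2)
      atTop (fun _ => (v : ℝ) / 2) ∧
    (v : ℝ) / 2 ≠ (v : ℝ) :=
  neyman_scott_inconsistency_general P X ξ v hv hdist hpair hiid
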